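/- The identity ζ(4,3) = −18 ζ(7) + 10 ζ(5) ζ(2) + (2/5) ζ(3) ζ(2)² holds, i.e. ∑_{0<j<k} 1/(j⁴ k³) = −18 ∑_{k≥1} 1/k⁷ + 10 (∑_{k≥1} 1/k⁵)(∑_{k≥1} 1/k²) + (2/5)(∑_{k≥1} 1/k³)(∑_{k≥1} 1/k²)². -/

import Mathlib

/-!
Three kinds of relations among double zeta values suffice. The stuffle product
`ζ(a) ζ(b) = ζ(a,b) + ζ(b,a) + ζ(a+b)` comes from splitting `ℕ²` along the diagonal.
The shuffle product comes from summing Euler's partial fraction expansion of `1 / (m^a n^b)`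
in powers of `1/m`, `1/n` and `1/(m+n)`. The sum formula `∑_{a+b=w, b≥2} ζ(a,b) = ζ(w)`
comes from summing `1 / (m^(w-2) n (m+n))` in two ways: by partial fractions, and over `n`
first, where `1 / (n (m+n)) = (1/n - 1/(m+n)) / m` telescopes to a harmonic number.
In weight 4 these give `ζ(4) = 2/5 ζ(2)²`; in weight 7 the stuffle and shuffle products of
`ζ(2) ζ(5)` and `ζ(3) ζ(4)`, together with the sum formula, form a linear system that
determines `ζ(4,3)`.
-/

open Finset Filter Topology

theorem Antitone.hasSum_sub_add {f : ℕ → ℝ} (hf : Antitone f) (hf0 : Tendsto f atTop (𝓝 0))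
    (m : ℕ) :
    HasSum (fun k ↦ f k - f (k + m)) (∑ i ∈ range m, f i) := by
  refine (hasSum_iff_tendsto_nat_of_nonneg (fun k ↦ sub_nonneg.2 (hf (k.le_add_right m))) _).2 ?_
  have hpartial (N : ℕ) : ∑ k ∈ range N, (f k - f (k + m)) =
      ∑ i ∈ range m, f i - ∑ i ∈ range m, f (N + i) := by
    have h₁ := sum_range_add f N m
    have h₂ := sum_range_add f m N
    simp only [add_comm m N, add_comm m] at h₂
    rw [sum_sub_distrib]
    linarith
  have htail : Tendsto (fun N ↦ ∑ i ∈ range m, f (N + i)) atTop (𝓝 0) := by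
    simpa using tendsto_finsetSum (range m) fun i _ ↦ hf0.comp (tendsto_add_atTop_nat i)
  simpa [hpartial] using tendsto_const_nhds.sub htail

theorem one_div_pow_succ_mul_mul_add {x y : ℝ} (hx : 0 < x) (hy : 0 < y) (n : ℕ) :
    1 / (x ^ (n + 1) * (y * (x + y))) =
      1 / (y * (x + y) ^ (n + 2)) +
        ∑ ab ∈ antidiagonal n, 1 / (x ^ (ab.1 + 1) * (x + y) ^ (ab.2 + 2)) := by
  induction n with
  | zero =>
    simp only [zero_add, Nat.antidiagonal_zero, sum_singleton]
    field_simp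
  | succ n ih =>
    have hstep :
        1 / (x ^ (n + 2) * (y * (x + y))) = 1 / x * (1 / (x ^ (n + 1) * (y * (x + y)))) := by
      rw [pow_succ]
      field_simp
    rw [hstep, ih, mul_add, mul_sum, Nat.sum_antidiagonal_succ]
    have hsum : ∑ ab ∈ antidiagonal n, 1 / x * (1 / (x ^ (ab.1 + 1) * (x + y) ^ (ab.2 + 2))) =
        ∑ ab ∈ antidiagonal n, 1 / (x ^ (ab.1 + 1 + 1) * (x + y) ^ (ab.2 + 2)) :=
      sum_congr rfl fun ab _ ↦ by rw [pow_succ _ (ab.1 + 1)]; field_simp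
    rw [hsum, ← add_assoc]
    congr 1
    field_simp
    ring

namespace MZV

noncomputable def zeta (s : ℕ) : ℝ := ∑' k : ℕ, 1 / ((k : ℝ) + 1) ^ s

noncomputable def doubleZeta (a b : ℕ) : ℝ :=
  ∑' p : {p : ℕ × ℕ // 0 < p.1 ∧ p.1 < p.2}, 1 / ((p.1.1 : ℝ) ^ a * (p.1.2 : ℝ) ^ b)

/-- The summand of `doubleZeta a b` at `m = j + 1`, `n = m + (k + 1)`: both `m` and `n - m` range
over the positive integers, which makes the shuffle and sum relations pointwise identities. -/
noncomputable def doubleZetaTerm (a b : ℕ) (p : ℕ × ℕ) : ℝ :=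
  1 / (((p.1 : ℝ) + 1) ^ a * (((p.1 : ℝ) + 1) + ((p.2 : ℝ) + 1)) ^ b)

theorem hasSum_zeta {s : ℕ} (hs : 2 ≤ s) :
    HasSum (fun k : ℕ ↦ 1 / ((k : ℝ) + 1) ^ s) (zeta s) := by
  refine Summable.hasSum ?_
  simpa using (summable_nat_add_iff 1).2 (Real.summable_one_div_nat_pow.2 hs)

theorem hasSum_zeta_mul_zeta {a b : ℕ} (ha : 2 ≤ a) (hb : 2 ≤ b) :
    HasSum (fun p : ℕ × ℕ ↦ 1 / ((p.1 : ℝ) + 1) ^ a * (1 / ((p.2 : ℝ) + 1) ^ b))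
      (zeta a * zeta b) :=
  (hasSum_zeta ha).mul (hasSum_zeta hb) <|
    (hasSum_zeta ha).summable.mul_of_nonneg (hasSum_zeta hb).summable
      (fun _ ↦ by positivity) (fun _ ↦ by positivity)

theorem summable_doubleZetaTerm {a b : ℕ} (ha : 1 ≤ a) (hb : 2 ≤ b) (hab : 4 ≤ a + b) :
    Summable (doubleZetaTerm a b) := by
  refine (hasSum_zeta_mul_zeta le_rfl le_rfl).summable.of_nonneg_of_le
    (fun p ↦ by unfold doubleZetaTerm; positivity) fun p ↦ ?_
  have hx : (1 : ℝ) ≤ (p.1 : ℝ) + 1 := by simp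
  have hy : (1 : ℝ) ≤ (p.2 : ℝ) + 1 := by simp
  set x := (p.1 : ℝ) + 1
  set y := (p.2 : ℝ) + 1
  rw [doubleZetaTerm, one_div_mul_one_div]
  refine one_div_le_one_div_of_le (by positivity) ?_
  rcases ha.eq_or_lt with rfl | ha
  · calc x ^ 2 * y ^ 2 = x ^ 1 * (x * y ^ 2) := by ring
      _ ≤ x ^ 1 * ((x + y) * (x + y) ^ 2) := by gcongr <;> linarith
      _ = x ^ 1 * (x + y) ^ 3 := by ring
      _ ≤ x ^ 1 * (x + y) ^ b := by gcongr; linarith; omega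
  · calc x ^ 2 * y ^ 2 ≤ x ^ a * (x + y) ^ 2 := by gcongr <;> linarith
      _ ≤ x ^ a * (x + y) ^ b := by gcongr; linarith

def pairsLtEquiv : ℕ × ℕ ≃ {p : ℕ × ℕ // 0 < p.1 ∧ p.1 < p.2} where
  toFun p := ⟨(p.1 + 1, p.1 + p.2 + 2), by omega⟩
  invFun q := (q.1.1 - 1, q.1.2 - q.1.1 - 1)
  left_inv p := by ext <;> simp; omega
  right_inv q := by ext <;> simp <;> omega

theorem doubleZeta_eq_tsum (a b : ℕ) : doubleZeta a b = ∑' p, doubleZetaTerm a b p := by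
  rw [doubleZeta, ← pairsLtEquiv.tsum_eq]
  congr! 2 with p
  simp only [pairsLtEquiv, Equiv.coe_fn_mk, doubleZetaTerm]
  push_cast
  ring_nf

theorem hasSum_doubleZetaTerm {a b : ℕ} (ha : 1 ≤ a := by omega) (hb : 2 ≤ b := by omega)
    (hab : 4 ≤ a + b := by omega) :
    HasSum (doubleZetaTerm a b) (doubleZeta a b) :=
  doubleZeta_eq_tsum a b ▸ (summable_doubleZetaTerm ha hb hab).hasSum

theorem hasSum_doubleZetaTerm_swap {a b : ℕ} (ha : 1 ≤ a := by omega) (hb : 2 ≤ b := by omega)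
    (hab : 4 ≤ a + b := by omega) :
    HasSum (fun p : ℕ × ℕ ↦ doubleZetaTerm a b p.swap) (doubleZeta a b) :=
  (Equiv.prodComm ℕ ℕ).hasSum_iff.2 (hasSum_doubleZetaTerm ha hb hab)

theorem doubleZetaTerm_swap (a b : ℕ) (p : ℕ × ℕ) :
    doubleZetaTerm a b p.swap =
      1 / (((p.2 : ℝ) + 1) ^ a * (((p.1 : ℝ) + 1) + ((p.2 : ℝ) + 1)) ^ b) := by
  rw [doubleZetaTerm, Prod.fst_swap, Prod.snd_swap, add_comm ((p.2 : ℝ) + 1)]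

noncomputable def stuffleEquiv : (ℕ × ℕ) ⊕ (ℕ × ℕ) ⊕ ℕ ≃ ℕ × ℕ :=
  Equiv.ofBijective
    (Sum.elim (fun p ↦ (p.1, p.1 + p.2 + 1))
      (Sum.elim (fun p ↦ (p.1 + p.2 + 1, p.1)) fun k ↦ (k, k)))
    ⟨by
      rintro (⟨a, b⟩ | ⟨a, b⟩ | a) (⟨c, d⟩ | ⟨c, d⟩ | c) h <;>
        simp [Prod.ext_iff] at h ⊢ <;> omega,
     by
      rintro ⟨m, n⟩
      rcases lt_trichotomy m n with h | rfl | h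
      · exact ⟨.inl (m, n - m - 1), by simp; omega⟩
      · exact ⟨.inr (.inr m), rfl⟩
      · exact ⟨.inr (.inl (n, m - n - 1)), by simp; omega⟩⟩

theorem zeta_mul_zeta {a b : ℕ} (ha : 2 ≤ a) (hb : 2 ≤ b) :
    zeta a * zeta b = doubleZeta a b + doubleZeta b a + zeta (a + b) := by
  refine (stuffleEquiv.hasSum_iff.2 (hasSum_zeta_mul_zeta ha hb)).unique ?_
  rw [add_assoc]
  refine HasSum.sum ?_ (HasSum.sum ?_ ?_)
  · convert hasSum_doubleZetaTerm (a := a) (b := b) using 1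
    ext p
    simp only [stuffleEquiv, Equiv.ofBijective, Equiv.coe_fn_mk, Function.comp_apply,
      Sum.elim_inl, doubleZetaTerm]
    push_cast
    ring
  · convert hasSum_doubleZetaTerm (a := b) (b := a) using 1
    ext p
    simp only [stuffleEquiv, Equiv.ofBijective, Equiv.coe_fn_mk, Function.comp_apply,
      Sum.elim_inl, Sum.elim_inr, doubleZetaTerm]
    push_cast
    ring
  · convert hasSum_zeta (s := a + b) (by omega) using 1
    ext k
    simp only [stuffleEquiv, Equiv.ofBijective, Equiv.coe_fn_mk, Function.comp_apply,
      Sum.elim_inr]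
    ring

theorem hasSum_doubleZeta_sum_range {a b : ℕ} (ha : 1 ≤ a) (hb : 2 ≤ b) (hab : 4 ≤ a + b) :
    HasSum (fun n : ℕ ↦ (∑ i ∈ range n, 1 / ((i : ℝ) + 1) ^ a) / ((n : ℝ) + 1) ^ b)
      (doubleZeta a b) := by
  have hsigma := HasAntidiagonal.sigmaAntidiagonalEquivProd.hasSum_iff.2
    (hasSum_doubleZetaTerm ha hb hab)
  have hfiber (q : ℕ) : HasSum (fun x : antidiagonal q ↦ doubleZetaTerm a b x.1)
      ((∑ i ∈ range (q + 1), 1 / ((i : ℝ) + 1) ^ a) / (((q + 1 : ℕ) : ℝ) + 1) ^ b) := by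
    convert hasSum_fintype _ using 1
    rw [sum_coe_sort (antidiagonal q) (doubleZetaTerm a b),
      ← Nat.sum_antidiagonal_eq_sum_range_succ (fun i _ ↦ 1 / ((i : ℝ) + 1) ^ a), sum_div]
    refine sum_congr rfl fun ik hik ↦ ?_
    have hq : ((ik.1 : ℝ) + 1) + ((ik.2 : ℝ) + 1) = ((q + 1 : ℕ) : ℝ) + 1 := by
      rw [HasAntidiagonal.mem_antidiagonal] at hik
      rw [← hik]
      push_cast
      ring
    rw [doubleZetaTerm, hq, div_div, one_div]
  refine (hasSum_nat_add_iff' 1).1 ?_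
  simpa using hsigma.sigma hfiber

theorem sum_antidiagonal_doubleZeta {n : ℕ} (hn : 1 ≤ n) :
    ∑ ab ∈ antidiagonal n, doubleZeta (ab.1 + 1) (ab.2 + 2) = zeta (n + 3) := by
  -- `r` is summed once via `one_div_pow_succ_mul_mul_add`, once row by row, where it telescopes.
  set r : ℕ × ℕ → ℝ := fun p ↦
    1 / (((p.1 : ℝ) + 1) ^ (n + 1) * (((p.2 : ℝ) + 1) * (((p.1 : ℝ) + 1) + ((p.2 : ℝ) + 1))))
  have hterms : HasSum r
      (doubleZeta 1 (n + 2) + ∑ ab ∈ antidiagonal n, doubleZeta (ab.1 + 1) (ab.2 + 2)) := by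
    have hsum : HasSum (fun p ↦ ∑ ab ∈ antidiagonal n, doubleZetaTerm (ab.1 + 1) (ab.2 + 2) p)
        (∑ ab ∈ antidiagonal n, doubleZeta (ab.1 + 1) (ab.2 + 2)) :=
      hasSum_sum fun ab hab ↦ hasSum_doubleZetaTerm (by omega) (by omega) (by
        rw [HasAntidiagonal.mem_antidiagonal] at hab
        omega)
    convert (hasSum_doubleZetaTerm_swap (a := 1) (b := n + 2)).add hsum using 1
    ext p
    rw [doubleZetaTerm_swap, pow_one]
    refine one_div_pow_succ_mul_mul_add ?_ ?_ n <;> positivity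
  have hrows (j : ℕ) : HasSum (fun k ↦ r (j, k))
      ((∑ i ∈ range (j + 1), 1 / ((i : ℝ) + 1)) / ((j : ℝ) + 1) ^ (n + 2)) := by
    have hf : Antitone fun k : ℕ ↦ 1 / ((k : ℝ) + 1) := fun k l hkl ↦ by
      dsimp only
      gcongr
    refine ((hf.hasSum_sub_add tendsto_one_div_add_atTop_nhds_zero_nat (j + 1)).div_const
      (((j : ℝ) + 1) ^ (n + 2))).congr_fun fun k ↦ ?_
    simp only [r]
    push_cast
    field_simp
    ring
  have hcols : HasSum
      (fun j : ℕ ↦ (∑ i ∈ range (j + 1), 1 / ((i : ℝ) + 1)) / ((j : ℝ) + 1) ^ (n + 2))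
      (doubleZeta 1 (n + 2) + zeta (n + 3)) := by
    convert (hasSum_doubleZeta_sum_range (a := 1) (b := n + 2) le_rfl (by omega) (by omega)).add
      (hasSum_zeta (s := n + 3) (by omega)) using 1
    ext j
    rw [sum_range_succ]
    simp only [pow_one]
    field_simp
    ring
  linarith [(hterms.prod_fiberwise hrows).unique hcols]

theorem zeta_two_mul_zeta_two : zeta 2 * zeta 2 = 4 * doubleZeta 1 3 + 2 * doubleZeta 2 2 := by
  have h := (hasSum_zeta_mul_zeta le_rfl le_rfl).unique <|
    ((hasSum_doubleZetaTerm (a := 1) (b := 3)).mul_left 2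
      |>.add (hasSum_doubleZetaTerm (a := 2) (b := 2))
      |>.add ((hasSum_doubleZetaTerm_swap (a := 1) (b := 3)).mul_left 2)
      |>.add (hasSum_doubleZetaTerm_swap (a := 2) (b := 2))).congr_fun fun p ↦ by
      simp only [doubleZetaTerm_swap]
      simp only [doubleZetaTerm]
      field_simp
      ring
  linarith

theorem zeta_two_mul_zeta_five :
    zeta 2 * zeta 5 = 10 * doubleZeta 1 6 + 5 * doubleZeta 2 5 + 3 * doubleZeta 3 4 +
      2 * doubleZeta 4 3 + doubleZeta 5 2 := by
  have h := (hasSum_zeta_mul_zeta (a := 2) (b := 5) le_rfl (by norm_num)).unique <|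
    ((hasSum_doubleZetaTerm (a := 1) (b := 6)).mul_left 5
      |>.add (hasSum_doubleZetaTerm (a := 2) (b := 5))
      |>.add ((hasSum_doubleZetaTerm_swap (a := 1) (b := 6)).mul_left 5)
      |>.add ((hasSum_doubleZetaTerm_swap (a := 2) (b := 5)).mul_left 4)
      |>.add ((hasSum_doubleZetaTerm_swap (a := 3) (b := 4)).mul_left 3)
      |>.add ((hasSum_doubleZetaTerm_swap (a := 4) (b := 3)).mul_left 2)
      |>.add (hasSum_doubleZetaTerm_swap (a := 5) (b := 2))).congr_fun fun p ↦ by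
      simp only [doubleZetaTerm_swap]
      simp only [doubleZetaTerm]
      field_simp
      ring
  linarith

theorem zeta_three_mul_zeta_four :
    zeta 3 * zeta 4 = 20 * doubleZeta 1 6 + 10 * doubleZeta 2 5 + 4 * doubleZeta 3 4 +
      doubleZeta 4 3 := by
  have h := (hasSum_zeta_mul_zeta (a := 3) (b := 4) (by norm_num) (by norm_num)).unique <|
    ((hasSum_doubleZetaTerm (a := 1) (b := 6)).mul_left 10
      |>.add ((hasSum_doubleZetaTerm (a := 2) (b := 5)).mul_left 4)
      |>.add (hasSum_doubleZetaTerm (a := 3) (b := 4))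
      |>.add ((hasSum_doubleZetaTerm_swap (a := 1) (b := 6)).mul_left 10)
      |>.add ((hasSum_doubleZetaTerm_swap (a := 2) (b := 5)).mul_left 6)
      |>.add ((hasSum_doubleZetaTerm_swap (a := 3) (b := 4)).mul_left 3)
      |>.add (hasSum_doubleZetaTerm_swap (a := 4) (b := 3))).congr_fun fun p ↦ by
      simp only [doubleZetaTerm_swap]
      simp only [doubleZetaTerm]
      field_simp
      ring
  linarith

theorem zeta_four : zeta 4 = 2 / 5 * zeta 2 ^ 2 := by
  have hsum : doubleZeta 1 3 + doubleZeta 2 2 = zeta 4 := by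
    simpa [Nat.antidiagonal_succ] using sum_antidiagonal_doubleZeta le_rfl
  linarith [zeta_mul_zeta le_rfl le_rfl, zeta_two_mul_zeta_two]

theorem doubleZeta_four_three :
    doubleZeta 4 3 = -18 * zeta 7 + 10 * zeta 5 * zeta 2 + 2 / 5 * zeta 3 * zeta 2 ^ 2 := by
  have hsum : doubleZeta 1 6 + doubleZeta 2 5 + doubleZeta 3 4 + doubleZeta 4 3 +
      doubleZeta 5 2 = zeta 7 := by
    simpa [Nat.antidiagonal_succ, add_assoc] using
      sum_antidiagonal_doubleZeta (n := 4) (by norm_num)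
  have h34 : zeta 3 * zeta 4 = 2 / 5 * zeta 3 * zeta 2 ^ 2 := by rw [zeta_four]; ring
  linarith [zeta_mul_zeta (a := 2) (b := 5) le_rfl (by norm_num),
    zeta_mul_zeta (a := 3) (b := 4) (by norm_num) (by norm_num),
    zeta_two_mul_zeta_five, zeta_three_mul_zeta_four]

end MZV

/-- The identity `ζ(4,3) = -18 ζ(7) + 10 ζ(5) ζ(2) + (2/5) ζ(3) ζ(2)²`. -/
theorem zeta_four_three :
    (∑' p : {p : ℕ × ℕ // 0 < p.1 ∧ p.1 < p.2}, 1 / ((p.1.1 : ℝ) ^ 4 * (p.1.2 : ℝ) ^ 3)) =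
      -18 * (∑' k : ℕ, 1 / ((k : ℝ) + 1) ^ 7) +
        10 * (∑' k : ℕ, 1 / ((k : ℝ) + 1) ^ 5) * (∑' k : ℕ, 1 / ((k : ℝ) + 1) ^ 2) +
        (2 / 5) * (∑' k : ℕ, 1 / ((k : ℝ) + 1) ^ 3) * (∑' k : ℕ, 1 / ((k : ℝ) + 1) ^ 2) ^ 2 :=
  MZV.doubleZeta_four_three
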